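/- arXiv:1609.06236 — 8 statements merged into one kernel-verified Lean document; each statement's English description precedes it below -/
import Mathlib

section
/- In the equilateral reference triangle with vertices P1=(0,0), P2=(1,0), P3=(1/2,√3/2), define P4(s)=P1+s(P2−P1), P5(t)=P2+t(P3−P2), P6(r)=P1+r(P3−P1). For any r,s∈(0,1/2] and t=1/2 (Configuration A), every interior angle of the triangle with vertices P4(s), P5(1/2), P6(r) is at most 150°. -/
/-!
With `u = P2 - P1` and `v = P3 - P1` (unit vectors with `⟪u, v⟫ = 1/2`), every edge vector of the
triangle `P4 P5 P6` is a combination `a • u + b • v`, whose inner products are quadratic forms in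
the coefficients. An angle is at most `5π/6` as soon as `⟪x, y⟫ ≥ -(√3/2) ‖x‖ ‖y‖`: at `P5` the
inner product is nonnegative, and at `P4` this reduces to a polynomial inequality in `r, s`.
The reflection exchanging `P2` and `P3` swaps `u` and `v`, `r` and `s`, `P4` and `P6`, so the
angle at `P6` is the angle at `P4` of the reflected configuration.
-/

open EuclideanGeometry Real Set

open scoped RealInnerProductSpace

theorem Real.arccos_le_five_pi_div_six {x : ℝ} (h : -(√3 / 2) ≤ x) : arccos x ≤ 5 * π / 6 :=
  calc arccos x ≤ arccos (-(√3 / 2)) := arccos_le_arccos h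
    _ = π - π / 6 := by
      rw [arccos_neg, ← cos_pi_div_six, arccos_cos (by positivity) (by linarith [pi_pos])]
    _ = 5 * π / 6 := by ring

namespace InnerProductGeometry

variable {V : Type*} [NormedAddCommGroup V] [InnerProductSpace ℝ V]

theorem angle_le_five_pi_div_six_of_le_inner {x y : V}
    (h : -(√3 / 2) * (‖x‖ * ‖y‖) ≤ ⟪x, y⟫) : angle x y ≤ 5 * π / 6 := by
  apply arccos_le_five_pi_div_six
  rcases (mul_nonneg (norm_nonneg x) (norm_nonneg y)).eq_or_lt with h0 | h0
  · rw [← h0, div_zero, neg_nonpos]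
    positivity
  · rwa [le_div_iff₀ h0]

theorem angle_le_five_pi_div_six_of_sq_inner_le {x y : V}
    (h : 4 * ⟪x, y⟫ ^ 2 ≤ 3 * (‖x‖ ^ 2 * ‖y‖ ^ 2)) : angle x y ≤ 5 * π / 6 := by
  apply angle_le_five_pi_div_six_of_le_inner
  have hsq : ⟪x, y⟫ ^ 2 ≤ (√3 / 2 * (‖x‖ * ‖y‖)) ^ 2 := by
    rw [mul_pow, div_pow, sq_sqrt zero_le_three]
    linarith
  rw [neg_mul]
  exact (abs_le_of_sq_le_sq' hsq (by positivity)).1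

end InnerProductGeometry

section UnitEquilateral

variable {V : Type*} [NormedAddCommGroup V] [InnerProductSpace ℝ V] {u v : V}
  (hu : ‖u‖ = 1) (hv : ‖v‖ = 1) (huv : ⟪u, v⟫ = 1 / 2)
include hu hv huv

theorem inner_smul_add_smul_of_equilateral (a b c d : ℝ) :
    ⟪a • u + b • v, c • u + d • v⟫ = a * c + b * d + (a * d + b * c) / 2 := by
  simp only [inner_add_left, inner_add_right, real_inner_smul_left, real_inner_smul_right,
    real_inner_self_eq_norm_sq, hu, hv, huv, real_inner_comm u v]
  ring

theorem norm_smul_add_smul_sq_of_equilateral (a b : ℝ) :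
    ‖a • u + b • v‖ ^ 2 = a ^ 2 + b ^ 2 + a * b := by
  rw [← real_inner_self_eq_norm_sq, inner_smul_add_smul_of_equilateral hu hv huv]
  ring

theorem angle_at_side_point_le_five_pi_div_six {r s : ℝ} (hr : r ∈ Ioc (0 : ℝ) (1 / 2))
    (hs : s ∈ Ioc (0 : ℝ) (1 / 2)) :
    InnerProductGeometry.angle ((-s) • u + r • v) ((1 / 2 - s) • u + (1 / 2 : ℝ) • v) ≤
      5 * π / 6 := by
  obtain ⟨hr0, hr2⟩ := hr
  obtain ⟨hs0, hs2⟩ := hs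
  apply InnerProductGeometry.angle_le_five_pi_div_six_of_sq_inner_le
  rw [inner_smul_add_smul_of_equilateral hu hv huv, norm_smul_add_smul_sq_of_equilateral hu hv huv,
    norm_smul_add_smul_sq_of_equilateral hu hv huv]
  -- `3 ‖x‖² ‖y‖² - 4 ⟪x, y⟫²` expands to this product
  have hQ : 0 ≤ s * (s ^ 2 * (3 / 2 - s) + r * (1 / 2 - s) * (3 - s) +
      r * (1 / 2 - r) * (3 / 2 - 2 * s)) :=
    mul_nonneg hs0.le <| add_nonneg
      (add_nonneg (mul_nonneg (sq_nonneg s) (by linarith))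
        (mul_nonneg (mul_nonneg hr0.le (by linarith)) (by linarith)))
      (mul_nonneg (mul_nonneg hr0.le (by linarith)) (by linarith))
  linear_combination hQ

theorem angle_at_midpoint_le_five_pi_div_six {r s : ℝ} (hr : r ∈ Ioc (0 : ℝ) (1 / 2))
    (hs : s ∈ Ioc (0 : ℝ) (1 / 2)) :
    InnerProductGeometry.angle ((s - 1 / 2) • u + (-1 / 2 : ℝ) • v)
      ((-1 / 2 : ℝ) • u + (r - 1 / 2) • v) ≤ 5 * π / 6 := by
  obtain ⟨hr0, hr2⟩ := hr
  obtain ⟨hs0, hs2⟩ := hs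
  apply InnerProductGeometry.angle_le_five_pi_div_six_of_le_inner
  refine le_trans (by rw [neg_mul, neg_nonpos]; positivity) ?_
  rw [inner_smul_add_smul_of_equilateral hu hv huv]
  nlinarith

end UnitEquilateral

theorem stmt_0
    (P1 P2 P3 : EuclideanSpace ℝ (Fin 2))
    (hP1 : P1 = !₂[0, 0]) (hP2 : P2 = !₂[1, 0]) (hP3 : P3 = !₂[1/2, Real.sqrt 3 / 2])
    (r s : ℝ) (hr : r ∈ Set.Ioc (0:ℝ) (1/2)) (hs : s ∈ Set.Ioc (0:ℝ) (1/2))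
    (P4 P5 P6 : EuclideanSpace ℝ (Fin 2))
    (hP4 : P4 = P1 + s • (P2 - P1))
    (hP5 : P5 = P2 + (1/2 : ℝ) • (P3 - P2))
    (hP6 : P6 = P1 + r • (P3 - P1)) :
    ∠ P6 P4 P5 ≤ 5 * π / 6 ∧ ∠ P4 P5 P6 ≤ 5 * π / 6 ∧ ∠ P5 P6 P4 ≤ 5 * π / 6 := by
  set u := P2 - P1 with hu_def
  set v := P3 - P1 with hv_def
  have hu : ‖u‖ = 1 := by simp [hu_def, hP1, hP2, EuclideanSpace.norm_eq, Fin.sum_univ_two]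
  have hv : ‖v‖ = 1 := by
    simp [hv_def, hP1, hP3, EuclideanSpace.norm_eq, Fin.sum_univ_two, div_pow]
    norm_num
  have huv : ⟪u, v⟫ = 1 / 2 := by
    simp [hu_def, hv_def, hP1, hP2, hP3, PiLp.inner_apply, Fin.sum_univ_two]
  have h64 : P6 - P4 = (-s) • u + r • v := by rw [hP4, hP6]; module
  have h54 : P5 - P4 = (1 / 2 - s) • u + (1 / 2 : ℝ) • v := by rw [hP4, hP5]; module
  have h45 : P4 - P5 = (s - 1 / 2) • u + (-1 / 2 : ℝ) • v := by rw [hP4, hP5]; module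
  have h65 : P6 - P5 = (-1 / 2 : ℝ) • u + (r - 1 / 2) • v := by rw [hP5, hP6]; module
  have h46 : P4 - P6 = (-r) • v + s • u := by rw [hP4, hP6]; module
  have h56 : P5 - P6 = (1 / 2 - r) • v + (1 / 2 : ℝ) • u := by rw [hP5, hP6]; module
  refine ⟨?_, ?_, ?_⟩
  · rw [EuclideanGeometry.angle, vsub_eq_sub, vsub_eq_sub, h64, h54]
    exact angle_at_side_point_le_five_pi_div_six hu hv huv hr hs
  · rw [EuclideanGeometry.angle, vsub_eq_sub, vsub_eq_sub, h45, h65]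
    exact angle_at_midpoint_le_five_pi_div_six hu hv huv hr hs
  · rw [EuclideanGeometry.angle, InnerProductGeometry.angle_comm, vsub_eq_sub, vsub_eq_sub,
      h46, h56]
    exact angle_at_side_point_le_five_pi_div_six hv hu (by rwa [real_inner_comm]) hs hr
end

section
/- In the equilateral reference triangle with vertices P1=(0,0), P2=(1,0), P3=(1/2,√3/2), with P4(s)=P1+s(P2−P1), P5(t)=P2+t(P3−P2), P6(r)=P1+r(P3−P1), for r=s∈(1/2,1) and t=1−s (Configuration B), the interior angle of triangle P4P5P6 at P5 lies between 60° and 120°. -/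
open EuclideanGeometry Real Set
open scoped RealInnerProductSpace

/-!
Put `a = P2 - P1`, `b = P3 - P1`. The sides of the angle at `P5` are `u = (s - 1) • b` and
`v = (2s - 1) • b - s • a`, and in an equilateral triangle `⟪a, b⟫ = ‖a‖² / 2 = ‖b‖² / 2`. The bound
`|cos ∠P4P5P6| ≤ 1/2` then becomes `4⟪u, v⟫² ≤ ‖u‖²‖v‖²`, whose two sides differ by
`3 ((s - 1)‖b‖²)² (2s - 1)(1 - s) ≥ 0`.
-/

variable {V : Type*} [NormedAddCommGroup V] [InnerProductSpace ℝ V]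

theorem Real.mem_Icc_of_abs_cos_le_half {θ : ℝ} (h0 : 0 ≤ θ) (hπ : θ ≤ π)
    (hcos : |cos θ| ≤ 1 / 2) : θ ∈ Icc (π / 3) (2 * π / 3) := by
  have hcos₂ : cos (2 * π / 3) = -(1 / 2) := by
    rw [show 2 * π / 3 = π - π / 3 by ring, cos_pi_sub, cos_pi_div_three]
  obtain ⟨hlo, hhi⟩ := abs_le.mp hcos
  constructor
  · by_contra! h
    have := cos_lt_cos_of_nonneg_of_le_pi h0 (by linarith [pi_pos]) h
    linarith [cos_pi_div_three]
  · by_contra! h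
    have := cos_lt_cos_of_nonneg_of_le_pi (by positivity) hπ h
    linarith

namespace InnerProductGeometry

theorem angle_mem_Icc_of_four_mul_inner_sq_le {x y : V}
    (h : 4 * ⟪x, y⟫ ^ 2 ≤ ‖x‖ ^ 2 * ‖y‖ ^ 2) : angle x y ∈ Icc (π / 3) (2 * π / 3) := by
  refine Real.mem_Icc_of_abs_cos_le_half (angle_nonneg x y) (angle_le_pi x y) ?_
  have hinner : |2 * ⟪x, y⟫| ≤ ‖x‖ * ‖y‖ :=
    abs_le_of_sq_le_sq (by linarith) (by positivity)
  rw [abs_mul, abs_two] at hinner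
  rw [cos_angle, abs_div, abs_of_nonneg (by positivity : 0 ≤ ‖x‖ * ‖y‖)]
  exact div_le_of_le_mul₀ (by positivity) (by norm_num) (by linarith)

end InnerProductGeometry

theorem angle_mem_Icc_of_equilateral {P1 P2 P3 : V} (h12 : ‖P2 - P1‖ = ‖P3 - P1‖)
    (h23 : ‖P3 - P2‖ = ‖P3 - P1‖) {s : ℝ} (hs : s ∈ Icc (1 / 2) 1) :
    ∠ (P1 + s • (P2 - P1)) (P2 + (1 - s) • (P3 - P2)) (P1 + s • (P3 - P1)) ∈
      Icc (π / 3) (2 * π / 3) := by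
  set a := P2 - P1
  set b := P3 - P1
  have hside₁ : P1 + s • a -ᵥ (P2 + (1 - s) • (P3 - P2)) = (s - 1) • b := by
    simp only [vsub_eq_sub, a, b]; module
  have hside₂ : P1 + s • b -ᵥ (P2 + (1 - s) • (P3 - P2)) = (2 * s - 1) • b - s • a := by
    simp only [vsub_eq_sub, a, b]; module
  have hab : ⟪b, a⟫ = ‖b‖ ^ 2 / 2 := by
    have := norm_sub_sq_real b a
    rw [show b - a = P3 - P2 by simp [a, b], h23, h12] at this
    linarith
  unfold EuclideanGeometry.angle
  rw [hside₁, hside₂]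
  apply InnerProductGeometry.angle_mem_Icc_of_four_mul_inner_sq_le
  simp only [norm_sub_sq_real, norm_smul, real_inner_smul_left, real_inner_smul_right, inner_sub_right,
    real_inner_self_eq_norm_sq, Real.norm_eq_abs, mul_pow, sq_abs, hab, h12]
  obtain ⟨hs₁, hs₂⟩ := hs
  have hgap : 0 ≤ ((s - 1) * ‖b‖ ^ 2) ^ 2 * ((2 * s - 1) * (1 - s)) :=
    mul_nonneg (sq_nonneg _) (mul_nonneg (by linarith) (by linarith))
  linear_combination 3 * hgap

theorem EuclideanSpace.norm_sub_two_vec (x y x' y' : ℝ) :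
    ‖!₂[x, y] - !₂[x', y']‖ = √((x - x') ^ 2 + (y - y') ^ 2) := by
  simp [EuclideanSpace.norm_eq, Fin.sum_univ_two]

theorem stmt_2
    (P1 P2 P3 : EuclideanSpace ℝ (Fin 2))
    (hP1 : P1 = !₂[0, 0]) (hP2 : P2 = !₂[1, 0]) (hP3 : P3 = !₂[1/2, Real.sqrt 3 / 2])
    (s : ℝ) (hs : s ∈ Set.Ioo (1/2 : ℝ) 1)
    (P4 P5 P6 : EuclideanSpace ℝ (Fin 2))
    (hP4 : P4 = P1 + s • (P2 - P1))
    (hP5 : P5 = P2 + (1 - s) • (P3 - P2))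
    (hP6 : P6 = P1 + s • (P3 - P1)) :
    π / 3 ≤ ∠ P4 P5 P6 ∧ ∠ P4 P5 P6 ≤ 2 * π / 3 := by
  have hsqrt3 : √3 ^ 2 = 3 := sq_sqrt (by norm_num)
  subst hP1 hP2 hP3 hP4 hP5 hP6
  refine angle_mem_Icc_of_equilateral ?_ ?_ (Ioo_subset_Icc_self hs)
  all_goals
    simp only [EuclideanSpace.norm_sub_two_vec]
    congr 1
    linarith
end

section
/- In the equilateral reference triangle with vertices P1=(0,0), P2=(1,0), P3=(1/2,√3/2), set P5=(P2+P3)/2, P4(s)=P1+s(P2−P1), P6(r)=P1+r(P3−P1). For r∈(1/2,1) and s∈(0,1/2] (Configuration C), the interior angle of triangle P4(s)P5P6(r) at P5 satisfies 30° ≤ angle ≤ 120°. -/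
/-! With `u = P4 - P5` and `v = P6 - P5`, the angle `θ` at `P5` satisfies
`cos θ ‖u‖‖v‖ = ⟪u, v⟫` and, in the plane, `sin θ ‖u‖‖v‖ = |u × v|`. Hence `θ ≥ π/6` and
`θ ≤ 2π/3` amount to `sin (π/6 - θ) ≤ 0` and `sin (θ - 2π/3) ≤ 0`, which in coordinates
become `8rs - 6r - 6s + 3 ≤ 0` and `r + s ≤ 3/2`. -/

open EuclideanGeometry Real Set
open scoped RealInnerProductSpace

lemma le_of_sin_sub_nonpos {a b : ℝ} (hab : a - b < π) (h : sin (a - b) ≤ 0) : a ≤ b := by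
  by_contra! hba
  exact h.not_gt (sin_pos_of_pos_of_lt_pi (sub_pos.2 hba) hab)

lemma cos_two_pi_div_three : cos (2 * π / 3) = -(1 / 2) := by
  rw [show 2 * π / 3 = π - π / 3 by ring, cos_pi_sub, cos_pi_div_three]

lemma sin_two_pi_div_three : sin (2 * π / 3) = √3 / 2 := by
  rw [show 2 * π / 3 = π - π / 3 by ring, sin_pi_sub, sin_pi_div_three]

namespace InnerProductGeometry

variable {V : Type*} [NormedAddCommGroup V] [InnerProductSpace ℝ V]

lemma le_angle_of_sin_mul_inner_le {x y : V} (hx : x ≠ 0) (hy : y ≠ 0) {a : ℝ} (ha : a < π)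
    (h : sin a * ⟪x, y⟫ ≤ cos a * (sin (angle x y) * (‖x‖ * ‖y‖))) : a ≤ angle x y := by
  have hN : 0 < ‖x‖ * ‖y‖ := by positivity
  refine le_of_sin_sub_nonpos (by linarith [angle_nonneg x y]) (nonpos_of_mul_nonpos_left ?_ hN)
  rw [sin_sub, ← cos_angle_mul_norm_mul_norm] at *
  linear_combination h

lemma angle_le_of_le_sin_mul_inner {x y : V} (hx : x ≠ 0) (hy : y ≠ 0) {a : ℝ} (ha : 0 < a)
    (h : cos a * (sin (angle x y) * (‖x‖ * ‖y‖)) ≤ sin a * ⟪x, y⟫) : angle x y ≤ a := by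
  have hN : 0 < ‖x‖ * ‖y‖ := by positivity
  refine le_of_sin_sub_nonpos (by linarith [angle_le_pi x y]) (nonpos_of_mul_nonpos_left ?_ hN)
  rw [sin_sub, ← cos_angle_mul_norm_mul_norm] at *
  linear_combination h

end InnerProductGeometry

def cross (x y : EuclideanSpace ℝ (Fin 2)) : ℝ := x 0 * y 1 - x 1 * y 0

lemma EuclideanSpace.inner_fin_two (x y : EuclideanSpace ℝ (Fin 2)) :
    ⟪x, y⟫ = x 0 * y 0 + x 1 * y 1 := by
  simp [PiLp.inner_apply, Fin.sum_univ_two, mul_comm]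

lemma sin_angle_mul_norm_mul_norm_eq_abs_cross (x y : EuclideanSpace ℝ (Fin 2)) :
    sin (InnerProductGeometry.angle x y) * (‖x‖ * ‖y‖) = |cross x y| := by
  rw [InnerProductGeometry.sin_angle_mul_norm_mul_norm, ← sqrt_sq_eq_abs]
  congr 1
  simp only [EuclideanSpace.inner_fin_two, cross]
  ring

theorem stmt_3
    (P1 P2 P3 : EuclideanSpace ℝ (Fin 2))
    (hP1 : P1 = !₂[0, 0]) (hP2 : P2 = !₂[1, 0]) (hP3 : P3 = !₂[1/2, Real.sqrt 3 / 2])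
    (r s : ℝ) (hr : r ∈ Set.Ioo (1/2 : ℝ) 1) (hs : s ∈ Set.Ioc (0:ℝ) (1/2))
    (P4 P5 P6 : EuclideanSpace ℝ (Fin 2))
    (hP4 : P4 = P1 + s • (P2 - P1))
    (hP5 : P5 = (1/2 : ℝ) • (P2 + P3))
    (hP6 : P6 = P1 + r • (P3 - P1)) :
    π / 6 ≤ ∠ P4 P5 P6 ∧ ∠ P4 P5 P6 ≤ 2 * π / 3 := by
  obtain ⟨hr1, hr2⟩ := hr
  obtain ⟨hs1, hs2⟩ := hs
  have h3 : √3 ^ 2 = 3 := sq_sqrt (by norm_num)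
  set u : EuclideanSpace ℝ (Fin 2) := !₂[s - 3/4, -(√3/4)]
  set v : EuclideanSpace ℝ (Fin 2) := !₂[r/2 - 3/4, √3 * (2*r - 1)/4]
  have hu : P4 -ᵥ P5 = u := by ext i; fin_cases i <;> simp [u, hP1, hP2, hP3, hP4, hP5] <;> ring
  have hv : P6 -ᵥ P5 = v := by ext i; fin_cases i <;> simp [v, hP1, hP2, hP3, hP5, hP6] <;> ring
  have hu0 : u ≠ 0 := fun h => by simpa [u] using congrArg (· 1) h
  have hv0 : v ≠ 0 := fun h => by
    have := congrArg (· 1) h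
    simp [v] at this
    linarith
  have hinner : ⟪u, v⟫ = (3 - 3*r - 3*s + 2*r*s) / 4 := by
    rw [EuclideanSpace.inner_fin_two]
    simp only [u, v, Matrix.cons_val_zero, Matrix.cons_val_one, Matrix.cons_val_fin_one]
    linear_combination (-(2*r - 1)/16) * h3
  have hsin : sin (InnerProductGeometry.angle u v) * (‖u‖ * ‖v‖) = √3/4 * (r + s - 2*r*s) := by
    have hpos : 0 ≤ r + s - 2*r*s := by nlinarith
    rw [sin_angle_mul_norm_mul_norm_eq_abs_cross,
      show cross u v = -(√3/4 * (r + s - 2*r*s)) by simp [cross, u, v]; ring, abs_neg,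
      abs_of_nonneg (by positivity)]
  rw [EuclideanGeometry.angle, hu, hv]
  refine ⟨InnerProductGeometry.le_angle_of_sin_mul_inner_le hu0 hv0 (by linarith [pi_pos]) ?_,
    InnerProductGeometry.angle_le_of_le_sin_mul_inner hu0 hv0 (by positivity) ?_⟩
  · rw [hsin, hinner, sin_pi_div_six, cos_pi_div_six]
    nlinarith [h3, mul_pos (sub_pos.2 hr1) (by linarith : (0:ℝ) < 3 - 4*s)]
  · rw [hsin, hinner, sin_two_pi_div_three, cos_two_pi_div_three]
    nlinarith [sqrt_nonneg 3]
end

section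
/- In the equilateral reference triangle with vertices P1=(0,0), P2=(1,0), P3=(1/2,√3/2), for r∈(0,1/2] let P4=P1+r(P2−P1), P6=P1+r(P3−P1), and P5=(P2+P3)/2. Then every interior angle of the triangle with vertices P2, P5, P6 is at most 120°. -/
/-!
Put `a = P2 - P1` and `b = P3 - P1`, unit vectors at 60°. Every edge vector of the triangle
`P2 P5 P6` is a combination of `a` and `b`, so its inner products are polynomials in `r`.
The cosines at `P2` and `P6` are nonnegative. At `P5` the inner product of the edge vectors is
`-r/4`, while `|P2P5| = 1/2` and `|P5P6|² = r² + 3(1 - 2r)/4 ≥ r²` precisely when `r ≤ 1/2`,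
so the cosine there is at least `-1/2`.
-/

open EuclideanGeometry Real Set RealInnerProductSpace

theorem Real.arccos_neg_one_half : arccos (-(1 / 2)) = 2 * π / 3 := by
  rw [arccos_neg, ← cos_pi_div_three, arccos_cos (by positivity) (by linarith [pi_pos])]
  ring

section Angle

variable {V P : Type*} [NormedAddCommGroup V] [InnerProductSpace ℝ V] [MetricSpace P]
  [NormedAddTorsor V P]

theorem InnerProductGeometry.angle_le_two_pi_div_three_of_le_inner {u v : V}
    (h : -(‖u‖ * ‖v‖ / 2) ≤ ⟪u, v⟫) : angle u v ≤ 2 * π / 3 := by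
  rw [angle, ← arccos_neg_one_half]
  apply arccos_le_arccos
  rcases (mul_nonneg (norm_nonneg u) (norm_nonneg v)).eq_or_lt with h0 | h0
  · rw [← h0, div_zero]
    norm_num
  · rw [le_div_iff₀ h0]
    linarith

theorem EuclideanGeometry.angle_le_two_pi_div_three_of_le_inner {p₁ p₂ p₃ : P}
    (h : -(‖p₁ -ᵥ p₂‖ * ‖p₃ -ᵥ p₂‖ / 2) ≤ ⟪p₁ -ᵥ p₂, p₃ -ᵥ p₂⟫) : ∠ p₁ p₂ p₃ ≤ 2 * π / 3 :=
  InnerProductGeometry.angle_le_two_pi_div_three_of_le_inner h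

end Angle

section Equilateral

variable {V : Type*} [NormedAddCommGroup V] [InnerProductSpace ℝ V] {a b : V} {s : ℝ}

theorem inner_smul_add_smul_of_equilateral_s5 (ha : ‖a‖ = s) (hb : ‖b‖ = s)
    (hab : ⟪a, b⟫ = s ^ 2 / 2) (x y z w : ℝ) :
    ⟪x • a + y • b, z • a + w • b⟫ = s ^ 2 * (x * z + y * w + (x * w + y * z) / 2) := by
  simp only [inner_add_left, inner_add_right, real_inner_smul_left, real_inner_smul_right,
    real_inner_self_eq_norm_sq, real_inner_comm a b, ha, hb, hab]
  ring

theorem norm_sq_smul_add_smul_of_equilateral (ha : ‖a‖ = s) (hb : ‖b‖ = s)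
    (hab : ⟪a, b⟫ = s ^ 2 / 2) (x y : ℝ) :
    ‖x • a + y • b‖ ^ 2 = s ^ 2 * (x ^ 2 + y ^ 2 + x * y) := by
  rw [← real_inner_self_eq_norm_sq, inner_smul_add_smul_of_equilateral_s5 ha hb hab]
  ring

theorem angles_le_two_pi_div_three_of_equilateral {A B C M D : V} {r : ℝ}
    (hAB : ‖B - A‖ = s) (hAC : ‖C - A‖ = s) (hBC : ‖C - B‖ = s)
    (hM : M = (1 / 2 : ℝ) • (B + C)) (hD : D = A + r • (C - A)) (hr₀ : 0 ≤ r) (hr : r ≤ 1 / 2) :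
    ∠ M B D ≤ 2 * π / 3 ∧ ∠ B M D ≤ 2 * π / 3 ∧ ∠ B D M ≤ 2 * π / 3 := by
  set a := B - A
  set b := C - A
  have hs : 0 ≤ s := hAB ▸ norm_nonneg a
  have hab : ⟪a, b⟫ = s ^ 2 / 2 := by
    have := norm_sub_sq_real b a
    rw [show b - a = C - B by simp [a, b], hBC, hAB, hAC, real_inner_comm] at this
    linarith
  have hinner := inner_smul_add_smul_of_equilateral_s5 hAB hAC hab
  have hnorm := norm_sq_smul_add_smul_of_equilateral hAB hAC hab
  have hMB : M - B = (-(1 / 2) : ℝ) • a + (1 / 2 : ℝ) • b := by rw [hM]; module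
  have hDB : D - B = (-1 : ℝ) • a + r • b := by rw [hD]; module
  have hBM : B - M = (1 / 2 : ℝ) • a + (-(1 / 2) : ℝ) • b := by rw [hM]; module
  have hDM : D - M = (-(1 / 2) : ℝ) • a + (r - 1 / 2) • b := by rw [hM, hD]; module
  have hBD : B - D = (1 : ℝ) • a + (-r) • b := by rw [hD]; module
  have hMD : M - D = (1 / 2 : ℝ) • a + (1 / 2 - r) • b := by rw [hM, hD]; module
  have hnBM : ‖B - M‖ = s / 2 := by
    rw [← sq_eq_sq₀ (norm_nonneg _) (by positivity), hBM, hnorm]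
    ring
  have hnDM : s * r ≤ ‖D - M‖ := by
    refine le_of_pow_le_pow_left₀ two_ne_zero (norm_nonneg _) ?_
    rw [hDM, hnorm]
    nlinarith [mul_nonneg (sq_nonneg s) (sub_nonneg.2 hr)]
  refine ⟨?_, ?_, ?_⟩ <;> apply EuclideanGeometry.angle_le_two_pi_div_three_of_le_inner <;>
    simp only [vsub_eq_sub]
  · have hinnerB : ⟪M - B, D - B⟫ = s ^ 2 * (r + 1) / 4 := by rw [hMB, hDB, hinner]; ring
    have : 0 ≤ ⟪M - B, D - B⟫ := hinnerB ▸ by positivity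
    linarith [mul_nonneg (norm_nonneg (M - B)) (norm_nonneg (D - B))]
  · have hinnerM : ⟪B - M, D - M⟫ = -(s ^ 2 * r / 4) := by rw [hBM, hDM, hinner]; ring
    rw [hinnerM, hnBM]
    nlinarith [mul_le_mul_of_nonneg_left hnDM hs]
  · have hinnerD : ⟪B - D, M - D⟫ = s ^ 2 * ((r - 5 / 8) ^ 2 + 23 / 64) := by
      rw [hBD, hMD, hinner]; ring
    have : 0 ≤ ⟪B - D, M - D⟫ := hinnerD ▸ by positivity
    linarith [mul_nonneg (norm_nonneg (B - D)) (norm_nonneg (M - D))]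

end Equilateral

theorem stmt_5_general
    (P1 P2 P3 : EuclideanSpace ℝ (Fin 2))
    (hP1 : P1 = !₂[0, 0]) (hP2 : P2 = !₂[1, 0]) (hP3 : P3 = !₂[1/2, Real.sqrt 3 / 2])
    (r : ℝ) (hr : r ∈ Set.Ioc (0:ℝ) (1/2))
    (P5 P6 : EuclideanSpace ℝ (Fin 2))
    (hP6 : P6 = P1 + r • (P3 - P1))
    (hP5 : P5 = (1/2 : ℝ) • (P2 + P3)) :
    ∠ P5 P2 P6 ≤ 2 * π / 3 ∧ ∠ P2 P5 P6 ≤ 2 * π / 3 ∧ ∠ P2 P6 P5 ≤ 2 * π / 3 := by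
  subst hP1 hP2 hP3
  refine angles_le_two_pi_div_three_of_equilateral (s := 1) ?_ ?_ ?_ hP5 hP6 hr.1.le hr.2 <;>
    norm_num [EuclideanSpace.norm_eq, Fin.sum_univ_two, div_pow]

theorem stmt_5
    (P1 P2 P3 : EuclideanSpace ℝ (Fin 2))
    (hP1 : P1 = !₂[0, 0]) (hP2 : P2 = !₂[1, 0]) (hP3 : P3 = !₂[1/2, Real.sqrt 3 / 2])
    (r : ℝ) (hr : r ∈ Set.Ioc (0:ℝ) (1/2))
    (P4 P5 P6 : EuclideanSpace ℝ (Fin 2))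
    (hP4 : P4 = P1 + r • (P2 - P1))
    (hP6 : P6 = P1 + r • (P3 - P1))
    (hP5 : P5 = (1/2 : ℝ) • (P2 + P3)) :
    ∠ P5 P2 P6 ≤ 2 * π / 3 ∧ ∠ P2 P5 P6 ≤ 2 * π / 3 ∧ ∠ P2 P6 P5 ≤ 2 * π / 3 :=
  stmt_5_general P1 P2 P3 hP1 hP2 hP3 r hr P5 P6 hP6 hP5
end

section
/- In the equilateral reference triangle P1=(0,0), P2=(1,0), P3=(1/2,√3/2), for r=s∈(1/2,1) with t=1−s, let P4=P1+s(P2−P1), P5=P2+(1−s)(P3−P2), P6=P1+r(P3−P1). Then every interior angle of triangle P6P5P3 is bounded above by 120°. -/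
open EuclideanGeometry Real Set

/-!
Since `P6` and `P5` lie strictly inside the sides `P3P1` and `P3P2`, the angle of the triangle
`P6P5P3` at `P3` is the `π / 3` angle of the equilateral triangle `P1P2P3`; the two remaining
angles are nonnegative and sum to `2π/3`.
-/

namespace EuclideanGeometry

variable {V P : Type*} [NormedAddCommGroup V] [InnerProductSpace ℝ V] [MetricSpace P]
  [NormedAddTorsor V P]

theorem angle_eq_pi_div_three_of_dist_eq {a b c : P} (hab : dist a b = dist a c)
    (hcb : dist c b = dist a c) (hac : a ≠ c) : ∠ a b c = π / 3 := by
  rw [angle, InnerProductGeometry.angle,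
    real_inner_eq_norm_mul_self_add_norm_mul_self_sub_norm_sub_mul_self_div_two]
  refine arccos_eq_of_eq_cos (by linarith [pi_nonneg]) (by linarith [pi_nonneg]) ?_
  simp only [vsub_sub_vsub_cancel_right, ← dist_eq_norm_vsub, hab, hcb, cos_pi_div_three]
  have : dist a c ≠ 0 := dist_ne_zero.2 hac
  field

theorem angle_lineMap_lineMap {a b c : P} (ha : a ≠ c) (hb : b ≠ c) {s t : ℝ}
    (hs : s ∈ Ioo 0 1) (ht : t ∈ Ioo 0 1) :
    ∠ (AffineMap.lineMap a c s) c (AffineMap.lineMap b c t) = ∠ a c b :=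
  ((sbtw_lineMap_iff.2 ⟨ha, hs⟩).symm.angle_eq_left _).trans
    ((sbtw_lineMap_iff.2 ⟨hb, ht⟩).symm.angle_eq_right _)

end EuclideanGeometry

theorem EuclideanSpace.dist_two (a b c d : ℝ) :
    dist !₂[a, b] !₂[c, d] = √((a - c) ^ 2 + (b - d) ^ 2) := by
  simp [EuclideanSpace.dist_eq, Fin.sum_univ_two, Real.dist_eq, sq_abs]

theorem stmt_15_general
    (P1 P2 P3 : EuclideanSpace ℝ (Fin 2))
    (hP1 : P1 = !₂[0, 0]) (hP2 : P2 = !₂[1, 0]) (hP3 : P3 = !₂[1/2, Real.sqrt 3 / 2])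
    (s : ℝ) (hs : s ∈ Set.Ioo (1/2 : ℝ) 1)
    (P5 P6 : EuclideanSpace ℝ (Fin 2))
    (hP5 : P5 = P2 + (1 - s) • (P3 - P2))
    (hP6 : P6 = P1 + s • (P3 - P1)) :
    ∠ P5 P6 P3 ≤ 2 * π / 3 ∧ ∠ P6 P5 P3 ≤ 2 * π / 3 ∧ ∠ P6 P3 P5 ≤ 2 * π / 3 := by
  have h12 : dist P1 P2 = 1 := by rw [hP1, hP2, EuclideanSpace.dist_two]; norm_num
  have h13 : dist P1 P3 = 1 := by rw [hP1, hP3, EuclideanSpace.dist_two]; norm_num [div_pow]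
  have h23 : dist P2 P3 = 1 := by rw [hP2, hP3, EuclideanSpace.dist_two]; norm_num [div_pow]
  have hs₀ : s ∈ Ioo (0 : ℝ) 1 := ⟨by linarith [hs.1], hs.2⟩
  have hs₁ : 1 - s ∈ Ioo (0 : ℝ) 1 := ⟨by linarith [hs.2], by linarith [hs.1]⟩
  rw [← add_comm, ← AffineMap.lineMap_apply_module'] at hP5 hP6
  have hP13 : P1 ≠ P3 := fun h ↦ by simp [h] at h13
  have hP23 : P2 ≠ P3 := fun h ↦ by simp [h] at h23
  have hapex : ∠ P6 P3 P5 = π / 3 := by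
    rw [hP5, hP6, angle_lineMap_lineMap hP13 hP23 hs₀ hs₁,
      angle_eq_pi_div_three_of_dist_eq (by rw [h13, h12]) (by rw [h23, h12])
        fun h ↦ by simp [h] at h12]
  have hP53 : P5 ≠ P3 := hP5 ▸ (sbtw_lineMap_iff.2 ⟨hP23, hs₁⟩).ne_right
  have hsum := angle_add_angle_add_angle_eq_pi P6 hP53
  rw [angle_comm P3 P5 P6] at hsum
  refine ⟨?_, ?_, ?_⟩ <;> linarith [angle_nonneg P6 P5 P3, angle_nonneg P5 P6 P3, pi_pos]

theorem stmt_15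
    (P1 P2 P3 : EuclideanSpace ℝ (Fin 2))
    (hP1 : P1 = !₂[0, 0]) (hP2 : P2 = !₂[1, 0]) (hP3 : P3 = !₂[1/2, Real.sqrt 3 / 2])
    (s : ℝ) (hs : s ∈ Set.Ioo (1/2 : ℝ) 1)
    (P4 P5 P6 : EuclideanSpace ℝ (Fin 2))
    (hP4 : P4 = P1 + s • (P2 - P1))
    (hP5 : P5 = P2 + (1 - s) • (P3 - P2))
    (hP6 : P6 = P1 + s • (P3 - P1)) :
    ∠ P5 P6 P3 ≤ 2 * π / 3 ∧ ∠ P6 P5 P3 ≤ 2 * π / 3 ∧ ∠ P6 P3 P5 ≤ 2 * π / 3 :=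
  stmt_15_general P1 P2 P3 hP1 hP2 hP3 s hs P5 P6 hP5 hP6
end

section
/- Let T̂ be a triangle in ℝ² all of whose interior angles are at most θ_max < 180°, and let F: ℝ² → ℝ² be an invertible affine map with condition number κ = ‖F‖‖F⁻¹‖ (operator norms of the linear part). Then there exists a bound θ' < 180° depending only on θ_max and κ such that all interior angles of F(T̂) are at most θ'. -/
open EuclideanGeometry Real Set InnerProductGeometry
open scoped RealInnerProductSpace

variable {E : Type*} [NormedAddCommGroup E] [InnerProductSpace ℝ E]

lemma chord_eq (x y : E) (hx : ‖x‖ = 1) (hy : ‖y‖ = 1) :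
    ‖x - y‖ = 2 * Real.sin (InnerProductGeometry.angle x y / 2) := by
  have hcos : Real.cos (InnerProductGeometry.angle x y) = ⟪x, y⟫ := by
    rw [InnerProductGeometry.cos_angle, hx, hy]
    simp
  have h1 : ‖x - y‖ ^ 2 = 2 - 2 * ⟪x, y⟫ := by
    rw [norm_sub_sq_real, hx, hy]
    ring
  have hs : Real.sin (InnerProductGeometry.angle x y / 2)
      = Real.sqrt ((1 - Real.cos (InnerProductGeometry.angle x y)) / 2) := by
    refine Real.sin_half_eq_sqrt (InnerProductGeometry.angle_nonneg _ _) ?_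
    have := InnerProductGeometry.angle_le_pi x y
    nlinarith [Real.pi_pos]
  rw [hs, hcos]
  rw [show (1 - ⟪x, y⟫) / 2 = (‖x - y‖ ^2) / 4 by rw [h1]; ring]
  rw [show (‖x - y‖ ^2) / 4 = (‖x - y‖ / 2)^2 by ring]
  rw [Real.sqrt_sq (by positivity)]
  ring

lemma normdiff (u w : E) (hu : ‖u‖ = 1) (hw : ‖w‖ = 1) (a b : ℝ)
    (ha : 0 < a) (hb : 0 < b) (hab : a ≤ b) :
    ‖u - w‖ ≤ 2 * a * ‖a⁻¹ • u - b⁻¹ • w‖ := by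
  have hdec : u - w = a • (a⁻¹ • u - b⁻¹ • w) + ((a / b - 1)) • w := by
    rw [smul_sub, smul_smul, smul_smul, mul_inv_cancel₀ ha.ne', one_smul]
    rw [sub_smul, one_smul, div_eq_mul_inv]
    abel
  have h2 : |a⁻¹ - b⁻¹| ≤ ‖a⁻¹ • u - b⁻¹ • w‖ := by
    have := abs_norm_sub_norm_le (a⁻¹ • u) (b⁻¹ • w)
    rwa [norm_smul, norm_smul, hu, hw, mul_one, mul_one,
      Real.norm_eq_abs, Real.norm_eq_abs, abs_of_pos (inv_pos.mpr ha), abs_of_pos (inv_pos.mpr hb)] at this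
  have h4 : (b - a) / (a * b) ≤ ‖a⁻¹ • u - b⁻¹ • w‖ := by
    calc (b - a) / (a * b) ≤ |a⁻¹ - b⁻¹| := by
          rw [show a⁻¹ - b⁻¹ = (b - a) / (a * b) by field_simp]
          exact le_abs_self _
    _ ≤ _ := h2
  have h5 : ‖u - w‖ ≤ a * ‖a⁻¹ • u - b⁻¹ • w‖ + |a / b - 1| := by
    calc ‖u - w‖ ≤ ‖a • (a⁻¹ • u - b⁻¹ • w)‖ + ‖(a / b - 1) • w‖ := by
          rw [hdec]; exact norm_add_le _ _
    _ = a * ‖a⁻¹ • u - b⁻¹ • w‖ + |a / b - 1| := by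
          rw [norm_smul, norm_smul, hw, mul_one, Real.norm_eq_abs,
            Real.norm_eq_abs, abs_of_pos ha]
  have h6 : |a / b - 1| ≤ a * ‖a⁻¹ • u - b⁻¹ • w‖ := by
    have he : |a / b - 1| = (b - a) / b := by
      rw [abs_of_nonpos (by rw [sub_nonpos]; exact div_le_one_of_le₀ hab hb.le)]
      field_simp
      ring
    rw [he]
    calc (b - a) / b = a * ((b - a) / (a * b)) := by field_simp
    _ ≤ a * ‖a⁻¹ • u - b⁻¹ • w‖ := mul_le_mul_of_nonneg_left h4 ha.le
  linarith

lemma key' (L : E ≃L[ℝ] E) (u w : E) (hu : ‖u‖ = 1) (hw : ‖w‖ = 1)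
    (hab : ‖L u‖ ≤ ‖L w‖) :
    Real.sin (InnerProductGeometry.angle u w / 2) ≤
      2 * (‖(L : E →L[ℝ] E)‖ * ‖(L.symm : E →L[ℝ] E)‖) *
        Real.sin (InnerProductGeometry.angle (L u) (L w) / 2) := by
  have hu0 : u ≠ 0 := by intro h; rw [h, norm_zero] at hu; norm_num at hu
  have hw0 : w ≠ 0 := by intro h; rw [h, norm_zero] at hw; norm_num at hw
  have hx0 : L u ≠ 0 := by simp [hu0]
  have hy0 : L w ≠ 0 := by simp [hw0]
  set a := ‖L u‖ with ha_def
  set b := ‖L w‖ with hb_def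
  have ha : 0 < a := norm_pos_iff.mpr hx0
  have hb : 0 < b := norm_pos_iff.mpr hy0
  -- normalized images
  have hxhat : ‖a⁻¹ • L u‖ = 1 := by
    rw [norm_smul, Real.norm_eq_abs, abs_of_pos (inv_pos.mpr ha), inv_mul_cancel₀ ha.ne']
  have hyhat : ‖b⁻¹ • L w‖ = 1 := by
    rw [norm_smul, Real.norm_eq_abs, abs_of_pos (inv_pos.mpr hb), inv_mul_cancel₀ hb.ne']
  have hangle : InnerProductGeometry.angle (a⁻¹ • L u) (b⁻¹ • L w)
      = InnerProductGeometry.angle (L u) (L w) := by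
    rw [InnerProductGeometry.angle_smul_left_of_pos _ _ (inv_pos.mpr ha),
      InnerProductGeometry.angle_smul_right_of_pos _ _ (inv_pos.mpr hb)]
  -- chords
  have hch1 : ‖u - w‖ = 2 * Real.sin (InnerProductGeometry.angle u w / 2) :=
    chord_eq u w hu hw
  have hch2 : ‖a⁻¹ • L u - b⁻¹ • L w‖
      = 2 * Real.sin (InnerProductGeometry.angle (L u) (L w) / 2) := by
    rw [chord_eq _ _ hxhat hyhat, hangle]
  -- pulling back through L.symm
  have hsymm : L.symm (a⁻¹ • L u - b⁻¹ • L w) = a⁻¹ • u - b⁻¹ • w := by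
    rw [map_sub, map_smul, map_smul, L.symm_apply_apply, L.symm_apply_apply]
  have hst : ‖a⁻¹ • u - b⁻¹ • w‖ ≤ ‖(L.symm : E →L[ℝ] E)‖ * ‖a⁻¹ • L u - b⁻¹ • L w‖ := by
    rw [← hsymm]
    exact (L.symm : E →L[ℝ] E).le_opNorm _
  have h1 : ‖u - w‖ ≤ 2 * a * ‖a⁻¹ • u - b⁻¹ • w‖ := normdiff u w hu hw a b ha hb hab
  have h3 : a ≤ ‖(L : E →L[ℝ] E)‖ := by
    calc a = ‖(L : E →L[ℝ] E) u‖ := rfl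
    _ ≤ ‖(L : E →L[ℝ] E)‖ * ‖u‖ := (L : E →L[ℝ] E).le_opNorm u
    _ = ‖(L : E →L[ℝ] E)‖ := by rw [hu, mul_one]
  have hsin2 : 0 ≤ Real.sin (InnerProductGeometry.angle (L u) (L w) / 2) := by
    apply Real.sin_nonneg_of_nonneg_of_le_pi
    · linarith [InnerProductGeometry.angle_nonneg (L u) (L w)]
    · linarith [InnerProductGeometry.angle_le_pi (L u) (L w), Real.pi_pos]
  have hLsymm_nonneg : 0 ≤ ‖(L.symm : E →L[ℝ] E)‖ := norm_nonneg _
  have h7 : a * ‖(L.symm : E →L[ℝ] E)‖ * Real.sin (InnerProductGeometry.angle (L u) (L w) / 2)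
      ≤ ‖(L : E →L[ℝ] E)‖ * ‖(L.symm : E →L[ℝ] E)‖ * Real.sin (InnerProductGeometry.angle (L u) (L w) / 2) :=
    mul_le_mul_of_nonneg_right (mul_le_mul_of_nonneg_right h3 hLsymm_nonneg) hsin2
  have h8 := mul_le_mul_of_nonneg_left hst (by linarith : (0:ℝ) ≤ 2 * a)
  have h9 : 2 * a * (‖(L.symm : E →L[ℝ] E)‖ * ‖a⁻¹ • L u - b⁻¹ • L w‖)
      = 4 * (a * ‖(L.symm : E →L[ℝ] E)‖ * Real.sin (InnerProductGeometry.angle (L u) (L w) / 2)) := by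
    rw [hch2]; ring
  linarith

lemma key (L : E ≃L[ℝ] E) (u w : E) (hu : ‖u‖ = 1) (hw : ‖w‖ = 1) :
    Real.sin (InnerProductGeometry.angle u w / 2) ≤
      2 * (‖(L : E →L[ℝ] E)‖ * ‖(L.symm : E →L[ℝ] E)‖) *
        Real.sin (InnerProductGeometry.angle (L u) (L w) / 2) := by
  rcases le_total ‖L u‖ ‖L w‖ with h | h
  · exact key' L u w hu hw h
  · have := key' L w u hw hu h
    rwa [InnerProductGeometry.angle_comm w u, InnerProductGeometry.angle_comm (L w) (L u)] at this

lemma angle_map_le (L : E ≃L[ℝ] E) (k m : ℝ)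
    (hk : ‖(L : E →L[ℝ] E)‖ * ‖(L.symm : E →L[ℝ] E)‖ ≤ k)
    (u w : E) (hu : u ≠ 0) (hw : w ≠ 0) (hm0 : 0 ≤ m) (hmπ : m < π)
    (hang : InnerProductGeometry.angle u w ≤ m) :
    InnerProductGeometry.angle (L u) (L w)
      ≤ π - 2 * Real.arcsin (Real.sin ((π - m) / 2) / (2 * k)) := by
  have hnu : 0 < ‖u‖ := norm_pos_iff.mpr hu
  have hnw : 0 < ‖w‖ := norm_pos_iff.mpr hw
  have hx0 : L u ≠ 0 := by simp [hu]
  -- positivity of the condition number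
  have hLu : 0 < ‖(L : E →L[ℝ] E) u‖ := norm_pos_iff.mpr hx0
  have hLpos : 0 < ‖(L : E →L[ℝ] E)‖ := by
    have h := (L : E →L[ℝ] E).le_opNorm u
    nlinarith
  have hLspos : 0 < ‖(L.symm : E →L[ℝ] E)‖ := by
    have h := (L.symm : E →L[ℝ] E).le_opNorm ((L : E →L[ℝ] E) u)
    have h2 : (L.symm : E →L[ℝ] E) ((L : E →L[ℝ] E) u) = u := L.symm_apply_apply u
    rw [h2] at h
    nlinarith
  have hκpos : 0 < ‖(L : E →L[ℝ] E)‖ * ‖(L.symm : E →L[ℝ] E)‖ := mul_pos hLpos hLspos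
  have hkpos : 0 < k := lt_of_lt_of_le hκpos hk
  -- normalized vectors
  set u' := ‖u‖⁻¹ • u with hu'def
  set w' := -(‖w‖⁻¹ • w) with hw'def
  have hu' : ‖u'‖ = 1 := by
    rw [hu'def, norm_smul, Real.norm_eq_abs, abs_of_pos (inv_pos.mpr hnu), inv_mul_cancel₀ hnu.ne']
  have hw' : ‖w'‖ = 1 := by
    rw [hw'def, norm_neg, norm_smul, Real.norm_eq_abs, abs_of_pos (inv_pos.mpr hnw),
      inv_mul_cancel₀ hnw.ne']
  have hA1 : InnerProductGeometry.angle u' w' = π - InnerProductGeometry.angle u w := by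
    rw [hu'def, hw'def, InnerProductGeometry.angle_neg_right,
      InnerProductGeometry.angle_smul_left_of_pos _ _ (inv_pos.mpr hnu),
      InnerProductGeometry.angle_smul_right_of_pos _ _ (inv_pos.mpr hnw)]
  have hA2 : InnerProductGeometry.angle (L u') (L w')
      = π - InnerProductGeometry.angle (L u) (L w) := by
    have e1 : L u' = ‖u‖⁻¹ • L u := by rw [hu'def, map_smul]
    have e2 : L w' = -(‖w‖⁻¹ • L w) := by rw [hw'def, map_neg, map_smul]
    rw [e1, e2, InnerProductGeometry.angle_neg_right,
      InnerProductGeometry.angle_smul_left_of_pos _ _ (inv_pos.mpr hnu),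
      InnerProductGeometry.angle_smul_right_of_pos _ _ (inv_pos.mpr hnw)]
  have hkey := key L u' w' hu' hw'
  set Θ := InnerProductGeometry.angle (L u) (L w) with hΘ
  have hΘ0 : 0 ≤ Θ := InnerProductGeometry.angle_nonneg _ _
  have hΘπ : Θ ≤ π := InnerProductGeometry.angle_le_pi _ _
  have hθ0 : 0 ≤ InnerProductGeometry.angle u w := InnerProductGeometry.angle_nonneg _ _
  -- sin ((π - m)/2) ≤ sin (angle u' w' / 2)
  have hmono : Real.sin ((π - m) / 2) ≤ Real.sin (InnerProductGeometry.angle u' w' / 2) := by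
    rw [hA1]
    apply Real.sin_le_sin_of_le_of_le_pi_div_two
    · linarith [Real.pi_pos]
    · linarith
    · linarith
  have hsinΘc : 0 ≤ Real.sin (InnerProductGeometry.angle (L u') (L w') / 2) := by
    apply Real.sin_nonneg_of_nonneg_of_le_pi
    · linarith [InnerProductGeometry.angle_nonneg (L u') (L w')]
    · linarith [InnerProductGeometry.angle_le_pi (L u') (L w'), Real.pi_pos]
  have hchain : Real.sin ((π - m) / 2) ≤ 2 * k * Real.sin ((π - Θ) / 2) := by
    rw [← hA2]
    have h1 : 2 * (‖(L : E →L[ℝ] E)‖ * ‖(L.symm : E →L[ℝ] E)‖) *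
        Real.sin (InnerProductGeometry.angle (L u') (L w') / 2)
        ≤ 2 * k * Real.sin (InnerProductGeometry.angle (L u') (L w') / 2) := by
      apply mul_le_mul_of_nonneg_right _ hsinΘc
      linarith
    linarith
  have harcsin : Real.arcsin (Real.sin ((π - m) / 2) / (2 * k)) ≤ (π - Θ) / 2 := by
    have hdiv : Real.sin ((π - m) / 2) / (2 * k) ≤ Real.sin ((π - Θ) / 2) := by
      rw [div_le_iff₀ (by linarith)]
      linarith [hchain]
    calc Real.arcsin (Real.sin ((π - m) / 2) / (2 * k))
        ≤ Real.arcsin (Real.sin ((π - Θ) / 2)) := Real.monotone_arcsin hdiv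
    _ = (π - Θ) / 2 := Real.arcsin_sin (by linarith [Real.pi_pos]) (by linarith)
  linarith


theorem stmt_16
    (θmax κ : ℝ) (hθ : θmax < π) :
    ∃ θ' : ℝ, θ' < π ∧
      ∀ (L : EuclideanSpace ℝ (Fin 2) ≃L[ℝ] EuclideanSpace ℝ (Fin 2))
        (b A B C : EuclideanSpace ℝ (Fin 2)),
        AffineIndependent ℝ ![A, B, C] →
        ‖(L : EuclideanSpace ℝ (Fin 2) →L[ℝ] EuclideanSpace ℝ (Fin 2))‖ *
          ‖(L.symm : EuclideanSpace ℝ (Fin 2) →L[ℝ] EuclideanSpace ℝ (Fin 2))‖ ≤ κ →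
        ∠ B A C ≤ θmax → ∠ A B C ≤ θmax → ∠ A C B ≤ θmax →
        (∠ (L B + b) (L A + b) (L C + b) ≤ θ' ∧
         ∠ (L A + b) (L B + b) (L C + b) ≤ θ' ∧
         ∠ (L A + b) (L C + b) (L B + b) ≤ θ') := by
  set m := max θmax 0 with hm_def
  set k := max κ 1 with hk_def
  have hm0 : 0 ≤ m := le_max_right _ _
  have hmπ : m < π := max_lt hθ Real.pi_pos
  refine ⟨π - 2 * Real.arcsin (Real.sin ((π - m) / 2) / (2 * k)), ?_, ?_⟩
  · have hpos : 0 < Real.arcsin (Real.sin ((π - m) / 2) / (2 * k)) := by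
      apply Real.arcsin_pos.mpr
      apply div_pos
      · apply Real.sin_pos_of_pos_of_lt_pi
        · linarith
        · linarith [Real.pi_pos]
      · have : (1:ℝ) ≤ k := le_max_right _ _
        linarith
    linarith
  · intro L b A B C hind hκ h1 h2 h3
    have hk : ‖(L : EuclideanSpace ℝ (Fin 2) →L[ℝ] EuclideanSpace ℝ (Fin 2))‖ *
        ‖(L.symm : EuclideanSpace ℝ (Fin 2) →L[ℝ] EuclideanSpace ℝ (Fin 2))‖ ≤ k :=
      hκ.trans (le_max_left _ _)
    have hi := hind.injective
    have hBA : B - A ≠ 0 := sub_ne_zero_of_ne (by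
      have := hi.ne (show (1 : Fin 3) ≠ 0 by decide); simpa using this)
    have hCA : C - A ≠ 0 := sub_ne_zero_of_ne (by
      have := hi.ne (show (2 : Fin 3) ≠ 0 by decide); simpa using this)
    have hAB : A - B ≠ 0 := sub_ne_zero_of_ne (by
      have := hi.ne (show (0 : Fin 3) ≠ 1 by decide); simpa using this)
    have hCB : C - B ≠ 0 := sub_ne_zero_of_ne (by
      have := hi.ne (show (2 : Fin 3) ≠ 1 by decide); simpa using this)
    have hAC : A - C ≠ 0 := sub_ne_zero_of_ne (by
      have := hi.ne (show (0 : Fin 3) ≠ 2 by decide); simpa using this)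
    have hBC : B - C ≠ 0 := sub_ne_zero_of_ne (by
      have := hi.ne (show (1 : Fin 3) ≠ 2 by decide); simpa using this)
    have conv : ∀ X Y Z : EuclideanSpace ℝ (Fin 2),
        ∠ X Y Z = InnerProductGeometry.angle (X - Y) (Z - Y) := by
      intro X Y Z
      rw [EuclideanGeometry.angle, vsub_eq_sub, vsub_eq_sub]
    have hsub : ∀ X Y : EuclideanSpace ℝ (Fin 2), (L X + b) - (L Y + b) = L (X - Y) := by
      intro X Y
      rw [map_sub]
      abel
    refine ⟨?_, ?_, ?_⟩
    · rw [conv, hsub, hsub]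
      exact angle_map_le L k m hk _ _ hBA hCA hm0 hmπ
        (by rw [conv] at h1; exact h1.trans (le_max_left _ _))
    · rw [conv, hsub, hsub]
      exact angle_map_le L k m hk _ _ hAB hCB hm0 hmπ
        (by rw [conv] at h2; exact h2.trans (le_max_left _ _))
    · rw [conv, hsub, hsub]
      exact angle_map_le L k m hk _ _ hAC hBC hm0 hmπ
        (by rw [conv] at h3; exact h3.trans (le_max_left _ _))
end

section
/- For r,s ∈ (0,1/2], in the equilateral reference triangle P1=(0,0), P2=(1,0), P3=(1/2,√3/2) with P4=P1+s(P2−P1), P5=(P2+P3)/2, P6=P1+r(P3−P1), the interior angle of triangle P4P5P6 at P5 is a monotonically nondecreasing function of each of r and s, and hence is maximized at r=s=1/2, where it equals 60°. -/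
open EuclideanGeometry Real Set

/-- The interior angle at `P5 = (P2+P3)/2` of the triangle `P4(s) P5 P6(r)` in the
equilateral reference triangle `P1 P2 P3`. -/
noncomputable def angleAtP5 (r s : ℝ) : ℝ :=
  let P1 : EuclideanSpace ℝ (Fin 2) := !₂[0, 0]
  let P2 : EuclideanSpace ℝ (Fin 2) := !₂[1, 0]
  let P3 : EuclideanSpace ℝ (Fin 2) := !₂[1/2, Real.sqrt 3 / 2]
  ∠ (P1 + s • (P2 - P1)) ((1/2 : ℝ) • (P2 + P3)) (P1 + r • (P3 - P1))

/-!
In the plane the angle between `u` and `v` is `π / 2 - arctan (⟪u, v⟫ / |u ∧ v|)`, so it is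
controlled by its cotangent. For `u = P4 - P5 = (s - 3/4, -√3/4)` and
`v = P6 - P5 = (r/2 - 3/4, √3 (2r - 1)/4)` the cotangent is
`(3 - 3r - 3s + 2rs) / (√3 (r + s - 2rs))`, symmetric in `r, s` and, in each variable, a
Möbius function with determinant `-(4r² - 6r + 3) < 0`, hence decreasing. At `r = s = 1/2`
it equals `1/√3`, the cotangent of `π/3`.
-/

def wedge (u v : EuclideanSpace ℝ (Fin 2)) : ℝ := u 0 * v 1 - u 1 * v 0

theorem inner_sq_add_wedge_sq (u v : EuclideanSpace ℝ (Fin 2)) :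
    inner ℝ u v ^ 2 + wedge u v ^ 2 = ‖u‖ ^ 2 * ‖v‖ ^ 2 := by
  simp only [EuclideanSpace.norm_sq_eq, PiLp.inner_apply, Fin.sum_univ_two, wedge,
    RCLike.inner_apply, conj_trivial, Real.norm_eq_abs, sq_abs]
  ring

theorem InnerProductGeometry.angle_eq_pi_div_two_sub_arctan (u v : EuclideanSpace ℝ (Fin 2))
    (h : wedge u v ≠ 0) :
    InnerProductGeometry.angle u v = π / 2 - arctan (inner ℝ u v / |wedge u v|) := by
  have hw : 0 < |wedge u v| := abs_pos.mpr h
  have hnorm : ‖u‖ * ‖v‖ = |wedge u v| * √(1 + (inner ℝ u v / |wedge u v|) ^ 2) := by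
    refine (pow_left_inj₀ (by positivity) (by positivity) two_ne_zero).mp ?_
    rw [mul_pow, mul_pow, sq_sqrt (by positivity), ← inner_sq_add_wedge_sq, div_pow, sq_abs]
    field_simp
    ring
  rw [InnerProductGeometry.angle, arccos_eq_pi_div_two_sub_arcsin, arctan_eq_arcsin, hnorm,
    ← div_div]

noncomputable def cotAngleAtP5 (r s : ℝ) : ℝ :=
  (3 - 3 * r - 3 * s + 2 * r * s) / (√3 * (r + s - 2 * r * s))

theorem angleAtP5_eq_pi_div_two_sub_arctan {r s : ℝ} (h : 0 < r + s - 2 * r * s) :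
    angleAtP5 r s = π / 2 - arctan (cotAngleAtP5 r s) := by
  have hangle : angleAtP5 r s = InnerProductGeometry.angle
      !₂[s - 3 / 4, -(√3 / 4)] !₂[r / 2 - 3 / 4, √3 * (2 * r - 1) / 4] := by
    rw [angleAtP5, EuclideanGeometry.angle]
    congr 1 <;> ext i <;> fin_cases i <;>
      simp only [vsub_eq_sub, PiLp.add_apply, PiLp.sub_apply, PiLp.smul_apply, smul_eq_mul,
        Fin.zero_eta, Fin.mk_one, Matrix.cons_val_zero, Matrix.cons_val_one,
        Matrix.cons_val_fin_one] <;> ring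
  have hinner : inner ℝ !₂[s - 3 / 4, -(√3 / 4)] !₂[r / 2 - 3 / 4, √3 * (2 * r - 1) / 4] =
      (3 - 3 * r - 3 * s + 2 * r * s) / 4 := by
    simp only [PiLp.inner_apply, RCLike.inner_apply, conj_trivial, Fin.sum_univ_two,
      Matrix.cons_val_zero, Matrix.cons_val_one, Matrix.cons_val_fin_one]
    linear_combination (1 - 2 * r) / 16 * mul_self_sqrt (by norm_num : (0 : ℝ) ≤ 3)
  have hwedge : wedge !₂[s - 3 / 4, -(√3 / 4)] !₂[r / 2 - 3 / 4, √3 * (2 * r - 1) / 4] =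
      -(√3 / 4 * (r + s - 2 * r * s)) := by
    simp only [wedge, Matrix.cons_val_zero, Matrix.cons_val_one, Matrix.cons_val_fin_one]
    ring
  have hw : 0 < √3 / 4 * (r + s - 2 * r * s) := mul_pos (by positivity) h
  rw [hangle,
    InnerProductGeometry.angle_eq_pi_div_two_sub_arctan _ _ (hwedge ▸ neg_ne_zero.2 hw.ne'),
    hinner, hwedge, abs_neg, abs_of_pos hw, cotAngleAtP5]
  field_simp

theorem cotAngleAtP5_comm (r s : ℝ) : cotAngleAtP5 r s = cotAngleAtP5 s r := by
  simp only [cotAngleAtP5]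
  ring_nf

theorem cotAngleAtP5_le_of_le_right {r s s' : ℝ} (h : 0 < r + s - 2 * r * s)
    (h' : 0 < r + s' - 2 * r * s') (hss' : s ≤ s') :
    cotAngleAtP5 r s' ≤ cotAngleAtP5 r s := by
  have h3 : 0 < √3 := by positivity
  have hdisc : 0 < 4 * r ^ 2 - 6 * r + 3 := by nlinarith [sq_nonneg (r - 3 / 4)]
  -- Cross-multiplied, the difference of the two sides is `√3 (s' - s) (4r² - 6r + 3)`.
  rw [cotAngleAtP5, cotAngleAtP5, div_le_div_iff₀ (by positivity) (by positivity)]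
  nlinarith [mul_nonneg (mul_nonneg (sub_nonneg.2 hss') hdisc.le) h3.le]

theorem add_sub_two_mul_pos_of_mem_Ioo {r s : ℝ} (hr : r ∈ Ioo 0 1) (hs : s ∈ Ioo 0 1) :
    0 < r + s - 2 * r * s := by
  nlinarith [mul_pos hr.1 (sub_pos.2 hs.2), mul_pos hs.1 (sub_pos.2 hr.2)]

theorem angleAtP5_mono {r r' s s' : ℝ} (hr : r ∈ Ioo 0 1) (hr' : r' ∈ Ioo 0 1)
    (hs : s ∈ Ioo 0 1) (hs' : s' ∈ Ioo 0 1) (hrr' : r ≤ r') (hss' : s ≤ s') :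
    angleAtP5 r s ≤ angleAtP5 r' s' := by
  have hpos := @add_sub_two_mul_pos_of_mem_Ioo
  rw [angleAtP5_eq_pi_div_two_sub_arctan (hpos hr hs),
    angleAtP5_eq_pi_div_two_sub_arctan (hpos hr' hs'), sub_le_sub_iff_left]
  refine arctan_mono ?_
  calc cotAngleAtP5 r' s' = cotAngleAtP5 s' r' := cotAngleAtP5_comm _ _
    _ ≤ cotAngleAtP5 s' r := cotAngleAtP5_le_of_le_right (hpos hs' hr) (hpos hs' hr') hrr'
    _ = cotAngleAtP5 r s' := cotAngleAtP5_comm _ _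
    _ ≤ cotAngleAtP5 r s := cotAngleAtP5_le_of_le_right (hpos hr hs) (hpos hr hs') hss'

theorem angleAtP5_half_half : angleAtP5 (1 / 2) (1 / 2) = π / 3 := by
  have hcot : cotAngleAtP5 (1 / 2) (1 / 2) = (√3)⁻¹ := by
    rw [cotAngleAtP5]
    field_simp
    norm_num
  rw [angleAtP5_eq_pi_div_two_sub_arctan (by norm_num), hcot, arctan_inv_sqrt_three]
  ring

theorem stmt_17 :
    (∀ r r' s s' : ℝ, r ∈ Set.Ioc (0:ℝ) (1/2) → r' ∈ Set.Ioc (0:ℝ) (1/2) →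
      s ∈ Set.Ioc (0:ℝ) (1/2) → s' ∈ Set.Ioc (0:ℝ) (1/2) →
      r ≤ r' → s ≤ s' → angleAtP5 r s ≤ angleAtP5 r' s') ∧
    (∀ r s : ℝ, r ∈ Set.Ioc (0:ℝ) (1/2) → s ∈ Set.Ioc (0:ℝ) (1/2) →
      angleAtP5 r s ≤ angleAtP5 (1/2) (1/2)) ∧
    angleAtP5 (1/2) (1/2) = π / 3 := by
  have hsub : Ioc (0 : ℝ) (1 / 2) ⊆ Ioo 0 1 := Ioc_subset_Ioo_right (by norm_num)
  have hmono : ∀ r r' s s' : ℝ, r ∈ Ioc (0 : ℝ) (1 / 2) → r' ∈ Ioc (0 : ℝ) (1 / 2) →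
      s ∈ Ioc (0 : ℝ) (1 / 2) → s' ∈ Ioc (0 : ℝ) (1 / 2) →
      r ≤ r' → s ≤ s' → angleAtP5 r s ≤ angleAtP5 r' s' :=
    fun r r' s s' hr hr' hs hs' hrr' hss' =>
      angleAtP5_mono (hsub hr) (hsub hr') (hsub hs) (hsub hs') hrr' hss'
  have hhalf : (1 / 2 : ℝ) ∈ Ioc 0 (1 / 2) := right_mem_Ioc.2 (by norm_num)
  exact ⟨hmono, fun r s hr hs => hmono r _ s _ hr hhalf hs hhalf hr.2 hs.2, angleAtP5_half_half⟩
end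

section
/- Let P1=(0,0), P2=(1,0), P3=(1/2,√3/2). For every r,s∈(0,1), the four points P4=P1+s(P2−P1), P5 chosen per configurations A–C (t=1/2 or t=1−s), P6=P1+r(P3−P1), together with P1,P2,P3, define four triangles (P1,P4,P6), (P4,P2,P5), (P6,P5,P3), (P4,P5,P6) whose interiors are pairwise disjoint and whose closed union equals the closed triangle P1P2P3. -/
/-!
Work in barycentric coordinates `(a, b, c)` with respect to `P1 P2 P3`. Each of the three cut
lines `P4P6`, `P4P5`, `P5P6` is the zero set of an affine function which is `≤ 0` on the corner
triangle it cuts off and `≥ 0` at every other vertex of the subdivision (its values at `P1, P2, P3`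
are `-sr, r(1-s), s(1-r)` for `P4P6`, and similarly for the others). A nonconstant affine function
is an open map, so the interiors of the two sides land in the disjoint open half-planes.

For the covering, a point of the triangle lies either on the corner side of one of the cut lines,
where the barycentric coordinates of the corner triangle are read off directly, or strictly on the
inner side of all three; then the three values of the cut functions, divided by their (constant)
sum, are its barycentric coordinates in `P4 P5 P6`.
-/

open EuclideanGeometry Real Set

section Covering

variable {V : Type*} [AddCommGroup V] [Module ℝ V]

theorem add_smul_sub_eq_add_one_sub_smul_sub (A B : V) (p : ℝ) :
    A + p • (B - A) = B + (1 - p) • (A - B) := by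
  module

theorem AffineMap.apply_add_smul_sub (f : V →ᵃ[ℝ] ℝ) (A B : V) (p : ℝ) :
    f (A + p • (B - A)) = f A + p * (f B - f A) := by
  simpa [AffineMap.lineMap_apply, add_comm] using f.apply_lineMap A B p

theorem mem_convexHull_triple_iff (A B C x : V) :
    x ∈ convexHull ℝ {A, B, C} ↔
      ∃ a b c : ℝ, 0 ≤ a ∧ 0 ≤ b ∧ 0 ≤ c ∧ a + b + c = 1 ∧ a • A + b • B + c • C = x := by
  rw [convexHull_insert (by simp), convexHull_pair, mem_convexJoin]
  constructor
  · rintro ⟨_, rfl, y, ⟨p, q, hp, hq, hpq, rfl⟩, ⟨u, v, hu, hv, huv, rfl⟩⟩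
    exact ⟨u, v * p, v * q, hu, by positivity, by positivity, by linear_combination v * hpq + huv,
      by module⟩
  · rintro ⟨a, b, c, ha, hb, hc, habc, rfl⟩
    rcases (add_nonneg hb hc).eq_or_lt with hbc | hbc
    · obtain ⟨rfl, rfl⟩ : b = 0 ∧ c = 0 := ⟨by linarith, by linarith⟩
      obtain rfl : a = 1 := by linarith
      exact ⟨A, rfl, B, left_mem_segment ℝ B C, by simpa using left_mem_segment ℝ A B⟩
    · refine ⟨A, rfl, (b / (b + c)) • B + (c / (b + c)) • C,
        ⟨b / (b + c), c / (b + c), by positivity, by positivity, by field_simp, rfl⟩,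
        a, b + c, ha, hbc.le, by linarith, ?_⟩
      match_scalars <;> field_simp

theorem mem_convexHull_corner {A B C x : V} {a b c p q : ℝ} (hp : 0 < p) (hq : 0 < q)
    (hb : 0 ≤ b) (hc : 0 ≤ c) (habc : a + b + c = 1) (hcut : b * q + c * p ≤ p * q)
    (hx : a • A + b • B + c • C = x) :
    x ∈ convexHull ℝ {A, A + p • (B - A), A + q • (C - A)} := by
  have hweight : b / p + c / q ≤ 1 := by
    rw [div_add_div _ _ hp.ne' hq.ne', div_le_one (by positivity)]
    linarith
  refine (mem_convexHull_triple_iff _ _ _ _).2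
    ⟨1 - b / p - c / q, b / p, c / q, by linarith, by positivity, by positivity, by ring, ?_⟩
  obtain rfl : a = 1 - b - c := by linarith
  rw [← hx]
  match_scalars <;> field_simp
  ring

theorem mem_convexHull_middle {P1 P2 P3 P4 P5 P6 x : V} {a b c r s t : ℝ}
    (habc : a + b + c = 1) (h1 : s * r < b * r + c * s) (h2 : t * (1 - s) < c * (1 - s) + a * t)
    (h3 : (1 - r) * (1 - t) < a * (1 - t) + b * (1 - r)) (hx : a • P1 + b • P2 + c • P3 = x)
    (hP4 : P4 = P1 + s • (P2 - P1)) (hP5 : P5 = P2 + t • (P3 - P2))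
    (hP6 : P6 = P1 + r • (P3 - P1)) :
    x ∈ convexHull ℝ {P4, P5, P6} := by
  obtain rfl : c = 1 - a - b := by linarith
  set D := r - r * t - r * s + s * t
  have hD : 0 < D := by nlinarith
  refine (mem_convexHull_triple_iff _ _ _ _).2
    ⟨(a * (1 - t) + b * (1 - r) - (1 - r) * (1 - t)) / D,
      (b * r + (1 - a - b) * s - s * r) / D,
      ((1 - a - b) * (1 - s) + a * t - t * (1 - s)) / D,
      div_nonneg (by linarith) hD.le, div_nonneg (by linarith) hD.le,
      div_nonneg (by linarith) hD.le, ?_, ?_⟩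
  · rw [← add_div, ← add_div, div_eq_one_iff_eq hD.ne']
    ring
  · rw [hP4, hP5, hP6, ← hx]
    match_scalars <;> field_simp <;> ring

theorem union_convexHull_subdivision_eq {P1 P2 P3 P4 P5 P6 : V} {r s t : ℝ}
    (hr : r ∈ Ioo 0 1) (hs : s ∈ Ioo 0 1) (ht : t ∈ Ioo 0 1)
    (hP4 : P4 = P1 + s • (P2 - P1)) (hP5 : P5 = P2 + t • (P3 - P2))
    (hP6 : P6 = P1 + r • (P3 - P1)) :
    convexHull ℝ {P1, P4, P6} ∪ convexHull ℝ {P4, P2, P5} ∪ convexHull ℝ {P6, P5, P3} ∪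
      convexHull ℝ {P4, P5, P6} = convexHull ℝ {P1, P2, P3} := by
  refine Subset.antisymm ?_ fun x hx ↦ ?_
  · have hK := convex_convexHull ℝ ({P1, P2, P3} : Set V)
    have h1 : P1 ∈ convexHull ℝ {P1, P2, P3} := subset_convexHull ℝ _ (by simp)
    have h2 : P2 ∈ convexHull ℝ {P1, P2, P3} := subset_convexHull ℝ _ (by simp)
    have h3 : P3 ∈ convexHull ℝ {P1, P2, P3} := subset_convexHull ℝ _ (by simp)
    have h4 := hP4 ▸ hK.add_smul_sub_mem h1 h2 (Ioo_subset_Icc_self hs)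
    have h5 := hP5 ▸ hK.add_smul_sub_mem h2 h3 (Ioo_subset_Icc_self ht)
    have h6 := hP6 ▸ hK.add_smul_sub_mem h1 h3 (Ioo_subset_Icc_self hr)
    simp only [union_subset_iff]
    refine ⟨⟨⟨?_, ?_⟩, ?_⟩, ?_⟩ <;>
      exact convexHull_min (by simp [insert_subset_iff, h1, h2, h3, h4, h5, h6]) hK
  obtain ⟨a, b, c, ha, hb, hc, habc, hx⟩ := (mem_convexHull_triple_iff _ _ _ _).1 hx
  by_cases h1 : b * r + c * s ≤ s * r
  · refine mem_union_left _ (mem_union_left _ (mem_union_left _ ?_))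
    rw [hP4, hP6]
    exact mem_convexHull_corner hs.1 hr.1 hb hc habc h1 hx
  by_cases h2 : c * (1 - s) + a * t ≤ t * (1 - s)
  · refine mem_union_left _ (mem_union_left _ (mem_union_right _ ?_))
    refine convexHull_mono (by simp [insert_subset_iff]) (s := {P2, P5, P4}) ?_
    rw [hP5, hP4, add_smul_sub_eq_add_one_sub_smul_sub P1]
    exact mem_convexHull_corner ht.1 (sub_pos.2 hs.2) hc ha (by linarith : b + c + a = 1) h2
      (by rw [← hx]; abel)
  by_cases h3 : a * (1 - t) + b * (1 - r) ≤ (1 - r) * (1 - t)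
  · refine mem_union_left _ (mem_union_right _ ?_)
    refine convexHull_mono (by simp [insert_subset_iff]) (s := {P3, P6, P5}) ?_
    rw [hP6, hP5, add_smul_sub_eq_add_one_sub_smul_sub P1, add_smul_sub_eq_add_one_sub_smul_sub P2]
    exact mem_convexHull_corner (sub_pos.2 hr.2) (sub_pos.2 ht.2) ha hb (by linarith : c + a + b = 1)
      h3 (by rw [← hx]; abel)
  exact mem_union_right _
    (mem_convexHull_middle habc (not_le.1 h1) (not_le.1 h2) (not_le.1 h3) hx hP4 hP5 hP6)

end Covering

theorem AffineBasis.exists_affineMap_apply_eq {ι k W P : Type*} [Fintype ι] [CommRing k]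
    [AddCommGroup W] [Module k W] [AddTorsor W P] (b : AffineBasis ι k P) (w : ι → k) :
    ∃ f : P →ᵃ[k] k, ∀ i, f (b i) = w i := by
  classical
  let coeHom : (P →ᵃ[k] k) →+ (P → k) := ⟨⟨(⇑), rfl⟩, fun _ _ ↦ rfl⟩
  refine ⟨∑ i, w i • b.coord i, fun j ↦ ?_⟩
  change coeHom (∑ i, w i • b.coord i) (b j) = w j
  simp [map_sum, coeHom, b.coord_apply]

theorem disjoint_interior_of_isOpenMap {X : Type*} [TopologicalSpace X] {f : X → ℝ}
    (hf : IsOpenMap f) {S T : Set X} (hS : S ⊆ {x | f x ≤ 0}) (hT : T ⊆ {x | 0 ≤ f x}) :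
    Disjoint (interior S) (interior T) := by
  have hS' : interior S ⊆ f ⁻¹' Iio 0 := by
    simpa using (interior_mono hS).trans (hf.interior_preimage_subset_preimage_interior (s := Iic 0))
  have hT' : interior T ⊆ f ⁻¹' Ioi 0 := by
    simpa using (interior_mono hT).trans (hf.interior_preimage_subset_preimage_interior (s := Ici 0))
  exact disjoint_of_subset hS' hT' (Iio_disjoint_Ioi_same.preimage f)

section Separation

variable {V : Type*} [AddCommGroup V] [Module ℝ V] [TopologicalSpace V]

theorem AffineMap.isOpenMap_of_apply_ne [IsTopologicalAddGroup V] [ContinuousSMul ℝ V]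
    {f : V →ᵃ[ℝ] ℝ} {x y : V} (h : f x ≠ f y) : IsOpenMap f := by
  have hlin : f.linear ≠ 0 := fun h0 ↦ h <| by
    rw [← sub_eq_zero, ← vsub_eq_sub, ← f.linearMap_vsub, h0, LinearMap.zero_apply]
  exact AffineMap.isOpenMap_linear_iff.1 <|
    LinearMap.isOpenMap_of_finiteDimensional _ (LinearMap.surjective_of_ne_zero hlin)

theorem disjoint_interior_convexHull_of_affineMap {f : V →ᵃ[ℝ] ℝ} (hf : IsOpenMap f)
    {S T : Set V} (hS : ∀ x ∈ S, f x ≤ 0) (hT : ∀ x ∈ T, 0 ≤ f x) :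
    Disjoint (interior (convexHull ℝ S)) (interior (convexHull ℝ T)) :=
  disjoint_interior_of_isOpenMap hf (convexHull_min hS ((convex_Iic 0).affine_preimage f))
    (convexHull_min hT ((convex_Ici 0).affine_preimage f))

theorem disjoint_interior_convexHull_corner [IsTopologicalAddGroup V] [ContinuousSMul ℝ V]
    {A B C B' C' M : V} {p q u : ℝ}
    (hABC : ∀ α β γ : ℝ, ∃ f : V →ᵃ[ℝ] ℝ, f A = α ∧ f B = β ∧ f C = γ)
    (hp : p ∈ Ioc 0 1) (hq : q ∈ Ioc 0 1) (hu : u ∈ Icc 0 1)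
    (hB' : B' = A + p • (B - A)) (hC' : C' = A + q • (C - A)) (hM : M = B + u • (C - B))
    ⦃S T : Set V⦄ (hS : S ⊆ {A, B', C'}) (hT : T ⊆ {B, C, B', C', M}) :
    Disjoint (interior (convexHull ℝ S)) (interior (convexHull ℝ T)) := by
  obtain ⟨hp0, hp1⟩ := hp
  obtain ⟨hq0, hq1⟩ := hq
  obtain ⟨f, hfA, hfB, hfC⟩ := hABC (-(p * q)) (q * (1 - p)) (p * (1 - q))
  have hfB' : f B' = 0 := by rw [hB', f.apply_add_smul_sub, hfA, hfB]; ring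
  have hfC' : f C' = 0 := by rw [hC', f.apply_add_smul_sub, hfA, hfC]; ring
  have hfM : 0 ≤ f M := by
    rw [hM, f.apply_add_smul_sub, hfB, hfC]
    nlinarith [mul_nonneg (mul_nonneg (sub_nonneg.2 hu.2) hq0.le) (sub_nonneg.2 hp1),
      mul_nonneg (mul_nonneg hu.1 hp0.le) (sub_nonneg.2 hq1)]
  have hfA' : f A < f B' := by rw [hfA, hfB']; nlinarith
  refine disjoint_interior_convexHull_of_affineMap (f.isOpenMap_of_apply_ne hfA'.ne)
    (fun x hx ↦ ?_) (fun x hx ↦ ?_)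
  · rcases hS hx with rfl | rfl | rfl <;> linarith
  · rcases hT hx with rfl | rfl | rfl | rfl | rfl <;> nlinarith

open Function in
theorem pairwise_disjoint_interior_subdivision [IsTopologicalAddGroup V] [ContinuousSMul ℝ V]
    {P1 P2 P3 P4 P5 P6 : V} {r s t : ℝ} (hind : AffineIndependent ℝ ![P1, P2, P3])
    (hspan : affineSpan ℝ (range ![P1, P2, P3]) = ⊤)
    (hr : r ∈ Ioo 0 1) (hs : s ∈ Ioo 0 1) (ht : t ∈ Ioo 0 1)
    (hP4 : P4 = P1 + s • (P2 - P1)) (hP5 : P5 = P2 + t • (P3 - P2))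
    (hP6 : P6 = P1 + r • (P3 - P1)) :
    Pairwise (Disjoint on fun i ↦ interior (![convexHull ℝ {P1, P4, P6},
      convexHull ℝ {P4, P2, P5}, convexHull ℝ {P6, P5, P3}, convexHull ℝ {P4, P5, P6}] i)) := by
  have interp (α β γ : ℝ) : ∃ f : V →ᵃ[ℝ] ℝ, f P1 = α ∧ f P2 = β ∧ f P3 = γ :=
    (AffineBasis.exists_affineMap_apply_eq ⟨_, hind, hspan⟩ ![α, β, γ]).imp
      fun _ hf ↦ ⟨hf 0, hf 1, hf 2⟩
  have corner1 := disjoint_interior_convexHull_corner interp (Ioo_subset_Ioc_self hs)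
    (Ioo_subset_Ioc_self hr) (Ioo_subset_Icc_self ht) hP4 hP6 hP5
  have corner2 := disjoint_interior_convexHull_corner
    (fun α β γ ↦ (interp γ α β).imp fun _ h ↦ ⟨h.2.1, h.2.2, h.1⟩) (Ioo_subset_Ioc_self ht)
    (Ioo_subset_Ioc_self (Ioo.one_sub_mem hs)) (Ioo_subset_Icc_self (Ioo.one_sub_mem hr)) hP5
    (hP4.trans (add_smul_sub_eq_add_one_sub_smul_sub _ _ _))
    (hP6.trans (add_smul_sub_eq_add_one_sub_smul_sub _ _ _))
  have corner3 := disjoint_interior_convexHull_corner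
    (fun α β γ ↦ (interp β γ α).imp fun _ h ↦ ⟨h.2.2, h.1, h.2.1⟩)
    (Ioo_subset_Ioc_self (Ioo.one_sub_mem hr)) (Ioo_subset_Ioc_self (Ioo.one_sub_mem ht))
    (Ioo_subset_Icc_self hs) (hP6.trans (add_smul_sub_eq_add_one_sub_smul_sub _ _ _))
    (hP5.trans (add_smul_sub_eq_add_one_sub_smul_sub _ _ _)) hP4
  refine (pairwise_disjoint_on _).2 fun i j hij ↦ ?_
  fin_cases i <;> fin_cases j <;> simp at hij
  · exact corner1 subset_rfl (by simp [insert_subset_iff])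
  · exact corner1 subset_rfl (by simp [insert_subset_iff])
  · exact corner1 subset_rfl (by simp [insert_subset_iff])
  · exact corner2 (by simp [insert_subset_iff]) (by simp [insert_subset_iff])
  · exact corner2 (by simp [insert_subset_iff]) (by simp [insert_subset_iff])
  · exact corner3 (by simp [insert_subset_iff]) (by simp [insert_subset_iff])

end Separation

theorem affineIndependent_equilateral :
    AffineIndependent ℝ
      ![(!₂[0, 0] : EuclideanSpace ℝ (Fin 2)), !₂[1, 0], !₂[1/2, Real.sqrt 3 / 2]] := by
  rw [affineIndependent_iff_not_collinear_set, collinear_iff_of_mem (p₀ := !₂[0, 0]) (by simp)]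
  rintro ⟨v, hv⟩
  obtain ⟨a, ha⟩ := hv !₂[1, 0] (by simp)
  obtain ⟨c, hc⟩ := hv !₂[1/2, Real.sqrt 3 / 2] (by simp)
  have h0 := congrArg (· 0) ha
  have h1 := congrArg (· 1) ha
  have h2 := congrArg (· 1) hc
  simp at h0 h1 h2
  have hv1 : v 1 = 0 := h1.resolve_left fun ha0 ↦ by simp [ha0] at h0
  simp [hv1] at h2

theorem stmt_18
    (P1 P2 P3 : EuclideanSpace ℝ (Fin 2))
    (hP1 : P1 = !₂[0, 0]) (hP2 : P2 = !₂[1, 0]) (hP3 : P3 = !₂[1/2, Real.sqrt 3 / 2])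
    (r s : ℝ) (hr : r ∈ Set.Ioo (0:ℝ) 1) (hs : s ∈ Set.Ioo (0:ℝ) 1)
    (t : ℝ) (ht : t = if r ≤ 1/2 ∨ s ≤ 1/2 then 1/2 else 1 - s)
    (P4 P5 P6 : EuclideanSpace ℝ (Fin 2))
    (hP4 : P4 = P1 + s • (P2 - P1))
    (hP5 : P5 = P2 + t • (P3 - P2))
    (hP6 : P6 = P1 + r • (P3 - P1))
    (T : Fin 4 → Set (EuclideanSpace ℝ (Fin 2)))
    (hT : T = ![convexHull ℝ {P1, P4, P6}, convexHull ℝ {P4, P2, P5},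
                convexHull ℝ {P6, P5, P3}, convexHull ℝ {P4, P5, P6}]) :
    (∀ i j : Fin 4, i ≠ j → interior (T i) ∩ interior (T j) = ∅) ∧
    (T 0 ∪ T 1 ∪ T 2 ∪ T 3 = convexHull ℝ {P1, P2, P3}) := by
  have ht' : t ∈ Ioo 0 1 := by
    rw [ht]
    split_ifs
    · norm_num
    · exact Ioo.one_sub_mem hs
  have hind : AffineIndependent ℝ ![P1, P2, P3] := hP1 ▸ hP2 ▸ hP3 ▸ affineIndependent_equilateral
  have hspan : affineSpan ℝ (range ![P1, P2, P3]) = ⊤ :=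
    hind.affineSpan_eq_top_iff_card_eq_finrank_add_one.2 (by simp)
  subst hT
  exact ⟨fun i j hij ↦ disjoint_iff_inter_eq_empty.1
      (pairwise_disjoint_interior_subdivision hind hspan hr hs ht' hP4 hP5 hP6 hij),
    union_convexHull_subdivision_eq hr hs ht' hP4 hP5 hP6⟩
end
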